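/- Let a, b ∈ Cℓ(1,2) both be nonzero with P(a) = P(b) = 0, let a⁺ = a'/(4(a₀²+a₂²+a₄²+a₆²)) and b⁺ = b'/(4(b₀²+b₂²+b₄²+b₆²)), and let d ∈ Cℓ(1,2). Then the equation axb = d has a solution x ∈ Cℓ(1,2) if and only if a·a⁺·d·b⁺·b = d, and in that case the solution set is exactly {a⁺db⁺ + y - a⁺aybb⁺ : y ∈ Cℓ(1,2)}. -/
import Mathlib


/-- The Clifford algebra `Cℓ(1,2)` as an 8-dimensional real vector space with
coordinates in the basis `e₀ = 1, e₁ = i₁, e₂ = i₂, e₃ = i₁i₂, e₄ = i₃,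
e₅ = i₁i₃, e₆ = i₂i₃, e₇ = i₁i₂i₃`, where `i₁² = 1`, `i₂² = i₃² = -1` and the
generators anticommute. -/
@[ext] structure Cl12 where
  x0 : ℝ
  x1 : ℝ
  x2 : ℝ
  x3 : ℝ
  x4 : ℝ
  x5 : ℝ
  x6 : ℝ
  x7 : ℝ

namespace Cl12

instance : Zero Cl12 := ⟨⟨0,0,0,0,0,0,0,0⟩⟩
instance : One Cl12 := ⟨⟨1,0,0,0,0,0,0,0⟩⟩
instance : Add Cl12 :=
  ⟨fun a b => ⟨a.x0+b.x0, a.x1+b.x1, a.x2+b.x2, a.x3+b.x3,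
               a.x4+b.x4, a.x5+b.x5, a.x6+b.x6, a.x7+b.x7⟩⟩
instance : Neg Cl12 := ⟨fun a => ⟨-a.x0,-a.x1,-a.x2,-a.x3,-a.x4,-a.x5,-a.x6,-a.x7⟩⟩
instance : Sub Cl12 := ⟨fun a b => a + -b⟩
instance : SMul ℝ Cl12 :=
  ⟨fun r a => ⟨r*a.x0, r*a.x1, r*a.x2, r*a.x3, r*a.x4, r*a.x5, r*a.x6, r*a.x7⟩⟩

/-- Multiplication in `Cℓ(1,2)`, from the multiplication table of the basis. -/
instance : Mul Cl12 := ⟨fun a b =>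
  ⟨a.x0*b.x0 + a.x1*b.x1 - a.x2*b.x2 + a.x3*b.x3 - a.x4*b.x4 + a.x5*b.x5 - a.x6*b.x6 - a.x7*b.x7,
   a.x0*b.x1 + a.x1*b.x0 + a.x2*b.x3 - a.x3*b.x2 + a.x4*b.x5 - a.x5*b.x4 - a.x6*b.x7 - a.x7*b.x6,
   a.x0*b.x2 + a.x1*b.x3 + a.x2*b.x0 - a.x3*b.x1 + a.x4*b.x6 - a.x5*b.x7 - a.x6*b.x4 - a.x7*b.x5,
   a.x0*b.x3 + a.x1*b.x2 - a.x2*b.x1 + a.x3*b.x0 - a.x4*b.x7 + a.x5*b.x6 - a.x6*b.x5 - a.x7*b.x4,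
   a.x0*b.x4 + a.x1*b.x5 - a.x2*b.x6 + a.x3*b.x7 + a.x4*b.x0 - a.x5*b.x1 + a.x6*b.x2 + a.x7*b.x3,
   a.x0*b.x5 + a.x1*b.x4 + a.x2*b.x7 - a.x3*b.x6 - a.x4*b.x1 + a.x5*b.x0 + a.x6*b.x3 + a.x7*b.x2,
   a.x0*b.x6 + a.x1*b.x7 + a.x2*b.x4 - a.x3*b.x5 - a.x4*b.x2 + a.x5*b.x3 + a.x6*b.x0 + a.x7*b.x1,
   a.x0*b.x7 + a.x1*b.x6 - a.x2*b.x5 + a.x3*b.x4 + a.x4*b.x3 - a.x5*b.x2 + a.x6*b.x1 + a.x7*b.x0⟩⟩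

/-- The Clifford conjugate `ā`. -/
def conj (a : Cl12) : Cl12 := ⟨a.x0, -a.x1, -a.x2, -a.x3, -a.x4, -a.x5, -a.x6, a.x7⟩

/-- The "prime" involution `a'`. -/
def prime (a : Cl12) : Cl12 := ⟨a.x0, a.x1, -a.x2, a.x3, -a.x4, a.x5, -a.x6, -a.x7⟩

/-- `N(a) = a₀² - a₁² + a₂² - a₃² + a₄² - a₅² + a₆² - a₇²`. -/
def N (a : Cl12) : ℝ := a.x0^2 - a.x1^2 + a.x2^2 - a.x3^2 + a.x4^2 - a.x5^2 + a.x6^2 - a.x7^2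

/-- `T(a) = a₀a₇ + a₂a₅ - a₁a₆ - a₃a₄`. -/
def T (a : Cl12) : ℝ := a.x0*a.x7 + a.x2*a.x5 - a.x1*a.x6 - a.x3*a.x4

/-- `P(a) = N(a)² + 4T(a)²`. -/
def P (a : Cl12) : ℝ := N a ^ 2 + 4 * T a ^ 2

/-- The basis element `e₇ = i₁i₂i₃`. -/
def e7 : Cl12 := ⟨0,0,0,0,0,0,0,1⟩

/-- The real scalar `r` as an element of `Cℓ(1,2)`. -/
def ofReal (r : ℝ) : Cl12 := ⟨r,0,0,0,0,0,0,0⟩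

/-- The "real part" `Cre(a) = a₀ + a₇e₇`. -/
def Cre (a : Cl12) : Cl12 := ⟨a.x0, 0, 0, 0, 0, 0, 0, a.x7⟩

end Cl12

namespace Cl12

lemma mul_def (a b : Cl12) : a * b =
  ⟨a.x0*b.x0 + a.x1*b.x1 - a.x2*b.x2 + a.x3*b.x3 - a.x4*b.x4 + a.x5*b.x5 - a.x6*b.x6 - a.x7*b.x7,
   a.x0*b.x1 + a.x1*b.x0 + a.x2*b.x3 - a.x3*b.x2 + a.x4*b.x5 - a.x5*b.x4 - a.x6*b.x7 - a.x7*b.x6,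
   a.x0*b.x2 + a.x1*b.x3 + a.x2*b.x0 - a.x3*b.x1 + a.x4*b.x6 - a.x5*b.x7 - a.x6*b.x4 - a.x7*b.x5,
   a.x0*b.x3 + a.x1*b.x2 - a.x2*b.x1 + a.x3*b.x0 - a.x4*b.x7 + a.x5*b.x6 - a.x6*b.x5 - a.x7*b.x4,
   a.x0*b.x4 + a.x1*b.x5 - a.x2*b.x6 + a.x3*b.x7 + a.x4*b.x0 - a.x5*b.x1 + a.x6*b.x2 + a.x7*b.x3,
   a.x0*b.x5 + a.x1*b.x4 + a.x2*b.x7 - a.x3*b.x6 - a.x4*b.x1 + a.x5*b.x0 + a.x6*b.x3 + a.x7*b.x2,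
   a.x0*b.x6 + a.x1*b.x7 + a.x2*b.x4 - a.x3*b.x5 - a.x4*b.x2 + a.x5*b.x3 + a.x6*b.x0 + a.x7*b.x1,
   a.x0*b.x7 + a.x1*b.x6 - a.x2*b.x5 + a.x3*b.x4 + a.x4*b.x3 - a.x5*b.x2 + a.x6*b.x1 + a.x7*b.x0⟩ := rfl

lemma add_def (a b : Cl12) : a + b =
  ⟨a.x0+b.x0, a.x1+b.x1, a.x2+b.x2, a.x3+b.x3, a.x4+b.x4, a.x5+b.x5, a.x6+b.x6, a.x7+b.x7⟩ := rfl

lemma neg_def (a : Cl12) : -a = ⟨-a.x0,-a.x1,-a.x2,-a.x3,-a.x4,-a.x5,-a.x6,-a.x7⟩ := rfl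

lemma sub_def (a b : Cl12) : a - b = a + -b := rfl

lemma smul_def (r : ℝ) (a : Cl12) :
    r • a = ⟨r*a.x0, r*a.x1, r*a.x2, r*a.x3, r*a.x4, r*a.x5, r*a.x6, r*a.x7⟩ := rfl

lemma zero_def : (0 : Cl12) = ⟨0,0,0,0,0,0,0,0⟩ := rfl
lemma one_def : (1 : Cl12) = ⟨1,0,0,0,0,0,0,0⟩ := rfl

instance : AddCommGroup Cl12 where
  add := (· + ·)
  zero := 0
  neg := Neg.neg
  sub := Sub.sub
  add_assoc a b c := by ext <;> simp [add_def] <;> ring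
  zero_add a := by ext <;> simp [add_def, zero_def]
  add_zero a := by ext <;> simp [add_def, zero_def]
  neg_add_cancel a := by ext <;> simp [add_def, neg_def, zero_def]
  add_comm a b := by ext <;> simp [add_def] <;> ring
  sub_eq_add_neg a b := rfl
  nsmul := nsmulRec
  zsmul := zsmulRec

lemma left_distrib'' (a b c : Cl12) : a * (b + c) = a * b + a * c := by
  ext <;> simp [mul_def, add_def] <;> ring

lemma right_distrib'' (a b c : Cl12) : (a + b) * c = a * c + b * c := by
  ext <;> simp [mul_def, add_def] <;> ring

lemma zero_mul'' (a : Cl12) : 0 * a = 0 := by ext <;> simp [mul_def, zero_def]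

lemma mul_zero'' (a : Cl12) : a * 0 = 0 := by ext <;> simp [mul_def, zero_def]

lemma mul_assoc'' (a b c : Cl12) : a * b * c = a * (b * c) := by
  ext <;> simp [mul_def] <;> ring

lemma one_mul'' (a : Cl12) : 1 * a = a := by ext <;> simp [mul_def, one_def]

lemma mul_one'' (a : Cl12) : a * 1 = a := by ext <;> simp [mul_def, one_def]

instance : Ring Cl12 where
  __ := (inferInstance : AddCommGroup Cl12)
  mul := (· * ·)
  one := 1
  left_distrib := left_distrib''
  right_distrib := right_distrib''
  zero_mul := zero_mul''
  mul_zero := mul_zero''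
  mul_assoc := mul_assoc''
  one_mul := one_mul''
  mul_one := mul_one''

lemma smul_mul_assoc' (r : ℝ) (x y : Cl12) : (r • x) * y = r • (x * y) := by
  ext <;> simp [mul_def, smul_def] <;> ring

lemma mul_smul_comm' (r : ℝ) (x y : Cl12) : x * (r • y) = r • (x * y) := by
  ext <;> simp [mul_def, smul_def] <;> ring

lemma smul_smul' (r t : ℝ) (x : Cl12) : r • t • x = (r * t) • x := by
  ext <;> simp [smul_def] <;> ring

lemma one_smul' (x : Cl12) : (1 : ℝ) • x = x := by
  ext <;> simp [smul_def]

lemma triple (a : Cl12)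
    (hN : a.x0^2 - a.x1^2 + a.x2^2 - a.x3^2 + a.x4^2 - a.x5^2 + a.x6^2 - a.x7^2 = 0)
    (hT : a.x0*a.x7 + a.x2*a.x5 - a.x1*a.x6 - a.x3*a.x4 = 0) :
    a * Cl12.prime a * a = (4*(a.x0^2 + a.x2^2 + a.x4^2 + a.x6^2)) • a := by
  ext
  · simp only [mul_def, smul_def, prime]; linear_combination (-3*a.x0) * hN + (-2*a.x7) * hT
  · simp only [mul_def, smul_def, prime]; linear_combination (-a.x1) * hN + (2*a.x6) * hT
  · simp only [mul_def, smul_def, prime]; linear_combination (-3*a.x2) * hN + (-2*a.x5) * hT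
  · simp only [mul_def, smul_def, prime]; linear_combination (-a.x3) * hN + (2*a.x4) * hT
  · simp only [mul_def, smul_def, prime]; linear_combination (-3*a.x4) * hN + (2*a.x3) * hT
  · simp only [mul_def, smul_def, prime]; linear_combination (-a.x5) * hN + (-2*a.x2) * hT
  · simp only [mul_def, smul_def, prime]; linear_combination (-3*a.x6) * hN + (2*a.x1) * hT
  · simp only [mul_def, smul_def, prime]; linear_combination (-a.x7) * hN + (-2*a.x0) * hT

lemma s_ne_zero (a : Cl12) (ha : a ≠ 0)
    (hN : a.x0^2 - a.x1^2 + a.x2^2 - a.x3^2 + a.x4^2 - a.x5^2 + a.x6^2 - a.x7^2 = 0) :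
    4 * (a.x0^2 + a.x2^2 + a.x4^2 + a.x6^2) ≠ 0 := by
  intro h
  apply ha
  have h0 : a.x0 = 0 := by nlinarith [sq_nonneg a.x0, sq_nonneg a.x2, sq_nonneg a.x4, sq_nonneg a.x6]
  have h2 : a.x2 = 0 := by nlinarith [sq_nonneg a.x0, sq_nonneg a.x2, sq_nonneg a.x4, sq_nonneg a.x6]
  have h4 : a.x4 = 0 := by nlinarith [sq_nonneg a.x0, sq_nonneg a.x2, sq_nonneg a.x4, sq_nonneg a.x6]
  have h6 : a.x6 = 0 := by nlinarith [sq_nonneg a.x0, sq_nonneg a.x2, sq_nonneg a.x4, sq_nonneg a.x6]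
  have h1 : a.x1 = 0 := by nlinarith [sq_nonneg a.x1, sq_nonneg a.x3, sq_nonneg a.x5, sq_nonneg a.x7]
  have h3 : a.x3 = 0 := by nlinarith [sq_nonneg a.x1, sq_nonneg a.x3, sq_nonneg a.x5, sq_nonneg a.x7]
  have h5 : a.x5 = 0 := by nlinarith [sq_nonneg a.x1, sq_nonneg a.x3, sq_nonneg a.x5, sq_nonneg a.x7]
  have h7 : a.x7 = 0 := by nlinarith [sq_nonneg a.x1, sq_nonneg a.x3, sq_nonneg a.x5, sq_nonneg a.x7]
  ext <;> simp [zero_def, h0, h1, h2, h3, h4, h5, h6, h7]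

end Cl12

/-- For nonzero `a, b ∈ Cℓ(1,2)` with `P(a) = P(b) = 0`, with Moore–Penrose
inverses `a⁺ = a'/(4(a₀²+a₂²+a₄²+a₆²))` and `b⁺ = b'/(4(b₀²+b₂²+b₄²+b₆²))`,
the equation `axb = d` is solvable iff `a·a⁺·d·b⁺·b = d`, in which case the
solution set is `{a⁺db⁺ + y - a⁺aybb⁺ : y ∈ Cℓ(1,2)}`. -/
theorem solve_axb (a b d : Cl12) (ha : a ≠ 0) (hb : b ≠ 0)
    (hPa : Cl12.P a = 0) (hPb : Cl12.P b = 0) (ap bp : Cl12)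
    (hap : ap = (4 * (a.x0^2 + a.x2^2 + a.x4^2 + a.x6^2))⁻¹ • Cl12.prime a)
    (hbp : bp = (4 * (b.x0^2 + b.x2^2 + b.x4^2 + b.x6^2))⁻¹ • Cl12.prime b) :
    ((∃ x : Cl12, a * x * b = d) ↔ a * ap * d * bp * b = d) ∧
    (a * ap * d * bp * b = d →
      {x : Cl12 | a * x * b = d} =
        {x : Cl12 | ∃ y : Cl12, x = ap * d * bp + y - ap * a * y * b * bp}) := by
  have hNTa := hPa
  have hNTb := hPb
  unfold Cl12.P Cl12.N Cl12.T at hNTa hNTb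
  have hNa : a.x0^2 - a.x1^2 + a.x2^2 - a.x3^2 + a.x4^2 - a.x5^2 + a.x6^2 - a.x7^2 = 0 := by
    have h2 : (a.x0^2 - a.x1^2 + a.x2^2 - a.x3^2 + a.x4^2 - a.x5^2 + a.x6^2 - a.x7^2)^2 = 0 :=
      le_antisymm (by linarith [sq_nonneg (a.x0*a.x7 + a.x2*a.x5 - a.x1*a.x6 - a.x3*a.x4)])
        (sq_nonneg _)
    exact pow_eq_zero_iff two_ne_zero |>.mp h2
  have hTa : a.x0*a.x7 + a.x2*a.x5 - a.x1*a.x6 - a.x3*a.x4 = 0 := by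
    have h2 : (a.x0*a.x7 + a.x2*a.x5 - a.x1*a.x6 - a.x3*a.x4)^2 = 0 :=
      le_antisymm (by linarith [sq_nonneg (a.x0^2 - a.x1^2 + a.x2^2 - a.x3^2 + a.x4^2 - a.x5^2 + a.x6^2 - a.x7^2)])
        (sq_nonneg _)
    exact pow_eq_zero_iff two_ne_zero |>.mp h2
  have hNb : b.x0^2 - b.x1^2 + b.x2^2 - b.x3^2 + b.x4^2 - b.x5^2 + b.x6^2 - b.x7^2 = 0 := by
    have h2 : (b.x0^2 - b.x1^2 + b.x2^2 - b.x3^2 + b.x4^2 - b.x5^2 + b.x6^2 - b.x7^2)^2 = 0 :=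
      le_antisymm (by linarith [sq_nonneg (b.x0*b.x7 + b.x2*b.x5 - b.x1*b.x6 - b.x3*b.x4)])
        (sq_nonneg _)
    exact pow_eq_zero_iff two_ne_zero |>.mp h2
  have hTb : b.x0*b.x7 + b.x2*b.x5 - b.x1*b.x6 - b.x3*b.x4 = 0 := by
    have h2 : (b.x0*b.x7 + b.x2*b.x5 - b.x1*b.x6 - b.x3*b.x4)^2 = 0 :=
      le_antisymm (by linarith [sq_nonneg (b.x0^2 - b.x1^2 + b.x2^2 - b.x3^2 + b.x4^2 - b.x5^2 + b.x6^2 - b.x7^2)])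
        (sq_nonneg _)
    exact pow_eq_zero_iff two_ne_zero |>.mp h2
  have hsa := Cl12.s_ne_zero a ha hNa
  have hsb := Cl12.s_ne_zero b hb hNb
  have hA : a * ap * a = a := by
    rw [hap, Cl12.mul_smul_comm', Cl12.smul_mul_assoc', Cl12.triple a hNa hTa,
      Cl12.smul_smul', inv_mul_cancel₀ hsa, Cl12.one_smul']
  have hB : b * bp * b = b := by
    rw [hbp, Cl12.mul_smul_comm', Cl12.smul_mul_assoc', Cl12.triple b hNb hTb,
      Cl12.smul_smul', inv_mul_cancel₀ hsb, Cl12.one_smul']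
  have hL : ∀ y : Cl12, a * ap * (a * y) = a * y := fun y => by rw [← mul_assoc, hA]
  have hR : ∀ y : Cl12, y * b * bp * b = y * b := fun y => by
    rw [mul_assoc (y*b) bp b, mul_assoc y b (bp*b), ← mul_assoc b bp b, hB]
  constructor
  · constructor
    · rintro ⟨x, hx⟩
      rw [← hx]
      have h1 : a * ap * (a * x * b) = a * x * b := by
        rw [mul_assoc a x b]; exact hL (x * b)
      rw [h1]
      exact hR (a * x)
    · intro h
      refine ⟨ap * d * bp, ?_⟩
      have : a * (ap * d * bp) * b = a * ap * d * bp * b := by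
        simp only [← mul_assoc]
      rw [this, h]
  · intro h
    ext x
    simp only [Set.mem_setOf_eq]
    constructor
    · intro hx
      refine ⟨x, ?_⟩
      have h3 : ap * a * x * b * bp = ap * d * bp := by
        rw [← hx]; simp only [← mul_assoc]
      rw [h3]
      abel
    · rintro ⟨y, rfl⟩
      have h1 : a * (ap * d * bp) * b = d := by simp only [← mul_assoc]; exact h
      have h3 : a * (ap * a * y * b * bp) * b = a * y * b := by
        simp only [← mul_assoc]
        rw [hA]
        exact hR (a * y)
      calc a * (ap * d * bp + y - ap * a * y * b * bp) * b
          = a * (ap * d * bp) * b + a * y * b - a * (ap * a * y * b * bp) * b := by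
            rw [mul_sub, mul_add, sub_mul, add_mul]
        _ = d := by rw [h1, h3]; abel
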